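/- arXiv:2010.00563 — 2 statements merged into one kernel-verified Lean document; each statement's English description precedes it below -/
import Mathlib

section
/- For every positive integer n, there are only finitely many isomorphism classes of finite subgroups of GL(n, ℤ). In particular, there is a uniform bound c_n on the cardinality of any finite subgroup of GL(n, ℤ). -/
/-!
Reduction modulo an odd prime `q` is injective on finite subgroups of `GL(n, ℤ)`, so each of
them is isomorphic to a subgroup of the finite group `GL(n, ZMod q)`. Injectivity means that the
kernel of the reduction is torsion-free, and it suffices to rule out elements of prime order `p`.
If `A = 1 + q^a x` with `a ≥ 1` and `A^p = 1`, the binomial expansion of `(1 + q^a x)^p - 1 = 0`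
forces `q ∣ x`: beyond the linear term `p q^a x`, every term is divisible by `q^(a+1)` if
`p ≠ q`, and by `q^(a+2)` if `p = q`, because `q` divides the inner binomial coefficients and
`q ≥ 3` handles the last term. So `A - 1` is divisible by every power of `q`, whence `A = 1`.
-/

open Matrix

theorem Nat.Prime.pow_add_two_dvd_choose_mul_pow {q a k : ℕ} (hq : q.Prime) (hq2 : q ≠ 2)
    (ha : a ≠ 0) (hk : 2 ≤ k) (hkq : k ≤ q) : q ^ (a + 2) ∣ q.choose k * (q ^ a) ^ k := by
  rw [← pow_mul]
  rcases hkq.lt_or_eq with hlt | rfl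
  · rw [pow_succ']
    exact mul_dvd_mul (hq.dvd_choose_self (by omega) hlt)
      (pow_dvd_pow q (by nlinarith [Nat.pos_of_ne_zero ha]))
  · have hq3 : 3 ≤ k := by have := hq.two_le; omega
    rw [Nat.choose_self, one_mul]
    exact pow_dvd_pow k (by nlinarith [Nat.pos_of_ne_zero ha])

section Semiring

variable {R : Type*} [Semiring R]

theorem natCast_mul_left_cancel [IsAddTorsionFree R] {n : ℕ} (hn : n ≠ 0) {x y : R}
    (h : (n : R) * x = n * y) : x = y := by
  simp only [← nsmul_eq_mul] at h
  exact IsAddTorsionFree.nsmul_right_injective hn h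

theorem dvd_of_natCast_mul_dvd_natCast_mul [IsAddTorsionFree R] {n : ℕ} (hn : n ≠ 0) {x y : R}
    (h : (n : R) * y ∣ n * x) : y ∣ x := by
  obtain ⟨z, hz⟩ := h
  exact ⟨z, natCast_mul_left_cancel hn (by rw [hz, mul_assoc])⟩

theorem one_add_natCast_mul_pow_add_two (c : ℕ) (x : R) (m : ℕ) :
    (1 + c * x) ^ (m + 2) = 1 + ((m + 2) * c : ℕ) * x +
      ∑ k ∈ Finset.range (m + 1),
        (((m + 2).choose (k + 2) * c ^ (k + 2) : ℕ) : R) * x ^ (k + 2) := by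
  have hterm : ∀ k, (c * x) ^ k * 1 ^ (m + 2 - k) * ((m + 2).choose k : R) =
      (((m + 2).choose k * c ^ k : ℕ) : R) * x ^ k := fun k => by
    rw [one_pow, mul_one, (Nat.cast_commute c x).mul_pow, ← Nat.cast_pow, ← Nat.cast_comm,
      ← mul_assoc, ← Nat.cast_mul]
  rw [add_comm, (Commute.one_right _).add_pow]
  simp only [hterm]
  rw [Finset.sum_range_succ' _ (m + 2), Finset.sum_range_succ' _ (m + 1)]
  simp only [Nat.choose_zero_right, Nat.choose_one_right, pow_zero, pow_one, zero_add, mul_one,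
    Nat.cast_one]
  abel

end Semiring

section Ring

variable {R : Type*} [Ring R]

theorem Nat.Coprime.natCast_dvd_of_dvd_mul_left {q p : ℕ} (hqp : q.Coprime p) {x : R}
    (h : (q : R) ∣ p * x) : (q : R) ∣ x := by
  obtain ⟨u, v, huv⟩ := hqp.isCoprime
  obtain ⟨y, hy⟩ := h
  refine ⟨u * x + v * y, ?_⟩
  calc x = ((u * q + v * p : ℤ) : R) * x := by rw [huv, Int.cast_one, one_mul]
    _ = q * (u * x) + v * (p * x) := by
      push_cast
      rw [add_mul, mul_assoc, ← mul_assoc (u : R), (Int.cast_commute u (q : R)).eq, mul_assoc,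
        mul_assoc]
    _ = q * (u * x + v * y) := by
      rw [hy, ← mul_assoc (v : R), (Int.cast_commute v (q : R)).eq, mul_add, mul_assoc]

theorem natCast_dvd_of_one_add_natCast_mul_pow_eq_one {c d m : ℕ} {x : R}
    (h : (1 + c * x) ^ (m + 2) = 1)
    (hd : ∀ k < m + 1, d ∣ (m + 2).choose (k + 2) * c ^ (k + 2)) :
    (d : R) ∣ ((m + 2) * c : ℕ) * x := by
  rw [one_add_natCast_mul_pow_add_two, add_assoc, add_eq_left, add_eq_zero_iff_eq_neg] at h
  rw [h, dvd_neg]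
  exact Finset.dvd_sum fun k hk => (Nat.cast_dvd_cast (hd k (Finset.mem_range.mp hk))).mul_right _

theorem natCast_pow_succ_dvd_sub_one_of_pow_prime_eq_one [IsAddTorsionFree R] {q p a : ℕ}
    (hq : q.Prime) (hq2 : q ≠ 2) (hp : p.Prime) (ha : a ≠ 0) {A : R}
    (hA : (q : R) ^ a ∣ A - 1) (hAp : A ^ p = 1) : (q : R) ^ (a + 1) ∣ A - 1 := by
  obtain ⟨x, hx⟩ := hA
  suffices (q : R) ∣ x by rw [hx, pow_succ]; exact mul_dvd_mul_left _ this
  obtain ⟨m, rfl⟩ := Nat.exists_eq_add_of_le' hp.two_le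
  rw [sub_eq_iff_eq_add', ← Nat.cast_pow] at hx
  rw [hx] at hAp
  have hqa : q ^ a ≠ 0 := pow_ne_zero a hq.ne_zero
  rcases eq_or_ne (m + 2) q with hpq | hpq
  · have h := natCast_dvd_of_one_add_natCast_mul_pow_eq_one (d := q ^ a * q * q) hAp fun k _ => by
      rw [hpq, mul_assoc, ← pow_two, ← pow_add]
      exact hq.pow_add_two_dvd_choose_mul_pow hq2 ha (by omega) (by omega)
    rw [hpq, mul_comm q, Nat.cast_mul (q ^ a * q) q] at h
    exact dvd_of_natCast_mul_dvd_natCast_mul (mul_ne_zero hqa hq.ne_zero) h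
  · have h := natCast_dvd_of_one_add_natCast_mul_pow_eq_one (d := q ^ a * q) hAp fun k _ => by
      have hexp : a + 1 ≤ a * (k + 2) := by nlinarith [Nat.pos_of_ne_zero ha]
      rw [← pow_succ, ← pow_mul]
      exact (pow_dvd_pow q hexp).mul_left _
    rw [Nat.cast_mul (q ^ a) q, mul_comm (m + 2), Nat.cast_mul (q ^ a), mul_assoc] at h
    exact ((Nat.coprime_primes hq hp).mpr hpq.symm).natCast_dvd_of_dvd_mul_left
      (dvd_of_natCast_mul_dvd_natCast_mul hqa h)

end Ring

namespace Matrix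

instance {m n α : Type*} [AddMonoid α] [IsAddTorsionFree α] : IsAddTorsionFree (Matrix m n α) :=
  Pi.instIsAddTorsionFree

variable {ι : Type*} [Fintype ι] [DecidableEq ι]

theorem natCast_dvd_iff {α : Type*} [CommSemiring α] {d : ℕ} {M : Matrix ι ι α} :
    (d : Matrix ι ι α) ∣ M ↔ ∀ i j, (d : α) ∣ M i j := by
  constructor
  · rintro ⟨N, rfl⟩ i j
    rw [← nsmul_eq_mul, smul_apply, nsmul_eq_mul]
    exact dvd_mul_right _ _
  · intro h
    choose N hN using h
    exact ⟨of N, by ext i j; rw [← nsmul_eq_mul, smul_apply, of_apply, nsmul_eq_mul, hN]⟩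

theorem eq_zero_of_forall_natCast_pow_dvd {q : ℕ} (hq : q ≠ 1) {M : Matrix ι ι ℤ}
    (h : ∀ a, (q : Matrix ι ι ℤ) ^ a ∣ M) : M = 0 := by
  ext i j
  by_contra hne
  have hfin : FiniteMultiplicity (q : ℤ) (M i j) :=
    Int.finiteMultiplicity_iff.mpr ⟨by simpa using hq, hne⟩
  refine FiniteMultiplicity.not_iff_forall.mpr (fun a => ?_) hfin
  have hqa : ((q ^ a : ℕ) : Matrix ι ι ℤ) ∣ M := by rw [Nat.cast_pow]; exact h a
  exact_mod_cast natCast_dvd_iff.mp hqa i j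

theorem eq_one_of_pow_prime_eq_one {q p : ℕ} (hq : q.Prime) (hq2 : q ≠ 2) (hp : p.Prime)
    {A : Matrix ι ι ℤ} (hA : (q : Matrix ι ι ℤ) ∣ A - 1) (hAp : A ^ p = 1) : A = 1 := by
  have hdvd : ∀ a, (q : Matrix ι ι ℤ) ^ (a + 1) ∣ A - 1 := by
    intro a
    induction a with
    | zero => simpa using hA
    | succ a ih =>
      exact natCast_pow_succ_dvd_sub_one_of_pow_prime_eq_one hq hq2 hp a.succ_ne_zero ih hAp
  exact sub_eq_zero.mp <| eq_zero_of_forall_natCast_pow_dvd hq.ne_one fun a =>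
    (pow_dvd_pow _ a.le_succ).trans (hdvd a)

end Matrix

theorem Subgroup.eq_one_of_isOfFinOrder {G : Type*} [Group G] {S : Subgroup G}
    (hS : ∀ g ∈ S, ∀ p : ℕ, p.Prime → g ^ p = 1 → g = 1) {g : G} (hg : g ∈ S)
    (hfin : IsOfFinOrder g) : g = 1 := by
  by_contra hne
  obtain ⟨p, hp, hpg⟩ := Nat.exists_prime_and_dvd (orderOf_eq_one_iff.not.mpr hne)
  have hord := orderOf_pow_orderOf_div hfin.orderOf_pos.ne' hpg
  have hgp : (g ^ (orderOf g / p)) ^ p = 1 := by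
    simpa only [hord] using pow_orderOf_eq_one (g ^ (orderOf g / p))
  rw [hS _ (S.pow_mem hg _) p hp hgp, orderOf_one] at hord
  exact hp.one_lt.ne hord

namespace Matrix.GeneralLinearGroup

variable {ι : Type*} [Fintype ι] [DecidableEq ι] {q : ℕ}

theorem natCast_dvd_sub_one_of_map_eq_one {A : GL ι ℤ}
    (hA : map (Int.castRingHom (ZMod q)) A = 1) :
    (q : Matrix ι ι ℤ) ∣ (A : Matrix ι ι ℤ) - 1 := by
  refine Matrix.natCast_dvd_iff.mpr fun i j => (ZMod.intCast_zmod_eq_zero_iff_dvd _ q).mp ?_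
  have hij := congr($hA i j)
  rw [GeneralLinearGroup.map_apply, Units.val_one, eq_intCast] at hij
  rw [sub_apply, Int.cast_sub, hij, one_apply, one_apply]
  split_ifs <;> simp

theorem eq_one_of_map_eq_one_of_isOfFinOrder (hq : q.Prime) (hq2 : q ≠ 2) {A : GL ι ℤ}
    (hA : map (Int.castRingHom (ZMod q)) A = 1) (hfin : IsOfFinOrder A) : A = 1 :=
  Subgroup.eq_one_of_isOfFinOrder (S := (map (Int.castRingHom (ZMod q))).ker)
    (fun _ hg _ hp hgp => Units.ext <| Matrix.eq_one_of_pow_prime_eq_one hq hq2 hp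
      (natCast_dvd_sub_one_of_map_eq_one hg)
      (by rw [← Units.val_pow_eq_pow_val, hgp, Units.val_one]))
    hA hfin

end Matrix.GeneralLinearGroup

namespace MonoidHom

variable {G K : Type*} [Group G] [Group K] (f : G →* K)

theorem injective_comp_subtype_of_finite (hf : ∀ g, IsOfFinOrder g → f g = 1 → g = 1)
    (H : Subgroup G) [Finite H] : Function.Injective (f.comp H.subtype) :=
  (injective_iff_map_eq_one _).mpr fun g hg =>
    Subtype.ext (hf g (H.subtype.isOfFinOrder (isOfFinOrder_of_finite g)) hg)

theorem exists_representatives_of_finite_subgroups [Finite K]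
    (hf : ∀ g, IsOfFinOrder g → f g = 1 → g = 1) :
    ∃ (k : ℕ) (Gs : Fin k → Subgroup G), (∀ i, Finite (Gs i)) ∧
      ∀ H : Subgroup G, Finite H → ∃ i, Nonempty (H ≃* Gs i) := by
  let image : {H : Subgroup G // Finite H} → Subgroup K := fun H => (f.comp H.1.subtype).range
  have hiso : ∀ H, Nonempty (H.1 ≃* image H) := fun H =>
    haveI := H.2; ⟨MonoidHom.ofInjective (f.injective_comp_subtype_of_finite hf H.1)⟩
  obtain ⟨k, ⟨e⟩⟩ := Finite.exists_equiv_fin (Set.range image)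
  choose rep hrep using fun L : Set.range image => L.2
  refine ⟨k, fun i => (rep (e.symm i)).1, fun i => (rep (e.symm i)).2, fun H hH => ?_⟩
  let L : Set.range image := ⟨image ⟨H, hH⟩, Set.mem_range_self _⟩
  have himage : image ⟨H, hH⟩ = image (rep (e.symm (e L))) := by
    rw [hrep, Equiv.symm_apply_apply]
  obtain ⟨φ⟩ := hiso ⟨H, hH⟩
  obtain ⟨ψ⟩ := hiso (rep (e.symm (e L)))
  exact ⟨e L, ⟨φ.trans ((MulEquiv.subgroupCongr himage).trans ψ.symm)⟩⟩

theorem card_le_of_finite_subgroup [Finite K] (hf : ∀ g, IsOfFinOrder g → f g = 1 → g = 1)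
    (H : Subgroup G) [Finite H] : Nat.card H ≤ Nat.card K :=
  Nat.card_le_card_of_injective _ (f.injective_comp_subtype_of_finite hf H)

end MonoidHom

theorem minkowski_finite_subgroups_general (n : ℕ) :
    (∃ (k : ℕ) (Gs : Fin k → Subgroup (GL (Fin n) ℤ)),
      (∀ i, Finite (Gs i)) ∧
      ∀ H : Subgroup (GL (Fin n) ℤ), Finite H → ∃ i, Nonempty (H ≃* Gs i)) ∧
    ∃ c : ℕ, 0 < c ∧ ∀ H : Subgroup (GL (Fin n) ℤ), Finite H → Nat.card H ≤ c := by
  let reduction := GeneralLinearGroup.map (n := Fin n) (Int.castRingHom (ZMod 3))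
  have hker : ∀ A, IsOfFinOrder A → reduction A = 1 → A = 1 := fun _ hA h1 =>
    GeneralLinearGroup.eq_one_of_map_eq_one_of_isOfFinOrder Nat.prime_three (by norm_num) h1 hA
  exact ⟨reduction.exists_representatives_of_finite_subgroups hker,
    Nat.card (GL (Fin n) (ZMod 3)), Nat.card_pos,
    fun H _ => reduction.card_le_of_finite_subgroup hker H⟩

/-- Minkowski's theorem: for every positive integer `n` there are, up to isomorphism, only
finitely many finite subgroups of `GL(n, ℤ)` (every finite subgroup is isomorphic to one of
finitely many subgroups), and in particular there is a uniform bound `c` on the cardinality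
of any finite subgroup of `GL(n, ℤ)`. -/
theorem minkowski_finite_subgroups (n : ℕ) (hn : 0 < n) :
    (∃ (k : ℕ) (Gs : Fin k → Subgroup (GL (Fin n) ℤ)),
      (∀ i, Finite (Gs i)) ∧
      ∀ H : Subgroup (GL (Fin n) ℤ), Finite H → ∃ i, Nonempty (H ≃* Gs i)) ∧
    ∃ c : ℕ, 0 < c ∧ ∀ H : Subgroup (GL (Fin n) ℤ), Finite H → Nat.card H ≤ c :=
  minkowski_finite_subgroups_general n
end

section
/- Let G be a profinite group, U an open subgroup, and M a nontrivial finite abelian group with G-action factoring through G/U. Suppose for each n there is a surjection ψ: G → Mⁿ ⋊ (G/U) lifting the quotient G → G/U. Then the n cocycles c_i: G → M obtained by composing ψ with the i-th coordinate projections are pairwise non-cohomologous, hence H¹(G, M) has at least n elements. -/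
/-- The diagonal action of `Q` on `Mⁿ` induced by an action `φ : Q →* MulAut M`. -/
def diagAut {Q M : Type*} [Group Q] [Group M] (φ : Q →* MulAut M) (n : ℕ) :
    Q →* MulAut (Fin n → M) where
  toFun q := MulEquiv.piCongrRight fun _ => φ q
  map_one' := by ext f i; simp
  map_mul' q r := by ext f i; simp

/-- Let `G` be a (profinite) group, `U` a normal subgroup, `M` a nontrivial finite abelian
group with `G`-action factoring through `G/U` via `φ`, and suppose `ψ : G → Mⁿ ⋊ (G/U)` is a
surjection lifting the quotient map `G → G/U`.  Then the `n` maps `cᵢ : G → M` obtained by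
composing `ψ` with the `i`-th coordinate projections are 1-cocycles, and they are pairwise
non-cohomologous; hence `H¹(G, M)` has at least `n` elements. -/
theorem cocycles_pairwise_noncohomologous {G : Type*} [Group G] (U : Subgroup G) [U.Normal]
    {M : Type*} [CommGroup M] [Finite M] [Nontrivial M]
    (φ : (G ⧸ U) →* MulAut M) (n : ℕ)
    (ψ : G →* SemidirectProduct (Fin n → M) (G ⧸ U) (diagAut φ n))
    (hsurj : Function.Surjective ψ)
    (hlift : ∀ g : G, (ψ g).right = QuotientGroup.mk g)
    (c : Fin n → G → M) (hc : ∀ i g, c i g = (ψ g).left i) :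
    (∀ (i : Fin n) (g h : G),
        c i (g * h) = c i g * φ (QuotientGroup.mk g) (c i h)) ∧
    (∀ i j : Fin n, i ≠ j →
        ¬ ∃ m : M, ∀ g : G,
          c i g * (c j g)⁻¹ = φ (QuotientGroup.mk g) m * m⁻¹) := by
  constructor
  · intro i g h
    have := congrArg SemidirectProduct.left (ψ.map_mul g h)
    have h2 : (ψ (g*h)).left i
        = (ψ g).left i * (diagAut φ n (ψ g).right) (ψ h).left i := by
      rw [this]; rfl
    rw [hc, hc, hc, h2, hlift]
    rfl
  · rintro i j hij ⟨m, hm⟩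
    obtain ⟨x, hx⟩ := exists_ne (1 : M)
    obtain ⟨g, hg⟩ := hsurj ⟨Pi.mulSingle i x, 1⟩
    have hr : (QuotientGroup.mk g : G ⧸ U) = 1 := by
      rw [← hlift, hg]
    have := hm g
    rw [hc, hc, hg, hr] at this
    simp only [SemidirectProduct.mk_eq_inl_mul_inr, map_one, MulAut.one_apply,
      mul_inv_cancel] at this
    have hi : (Pi.mulSingle i x : Fin n → M) i = x := by simp
    have hj : (Pi.mulSingle i x : Fin n → M) j = 1 := by simp [Pi.mulSingle_eq_of_ne' hij]
    rw [hi, hj] at this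
    simp at this
    exact hx this
end
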